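/- Let N ≥ 1 be a natural number and let q, a, e ∈ ℂ with |q| < 1, a ≠ 0, e ≠ 0, and suppose 1 − a q^k ≠ 0 for 0 ≤ k ≤ N−1 and e ≠ q^k for 1 ≤ k ≤ N (so that (q/e)_n ≠ 0 and e − q^k ≠ 0 for the indices appearing). Then ∑_{n=1}^N [N,n]_q (−1)^n (q)_{n−1}² a^n q^{n(n+1)/2} / ((a)_n (q/e)_n e^n) = − ∑_{n=1}^N [N,n]_q ((q)_{n−1} (a)_{N−n} a^n / (a)_N) · ∑_{k=1}^n q^k/(e − q^k). -/

import Mathlib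

open Finset

/-- Finite q-Pochhammer symbol `(a;q)_n`. -/
noncomputable def qPoch (q a : ℂ) (n : ℕ) : ℂ :=
  ∏ k ∈ Finset.range n, (1 - a * q ^ k)

/-- Infinite q-Pochhammer symbol `(a;q)_∞`. -/
noncomputable def qPochInf (q a : ℂ) : ℂ :=
  ∏' k : ℕ, (1 - a * q ^ k)

/-- q-binomial coefficient. -/
noncomputable def qBinom (q : ℂ) (N n : ℕ) : ℂ :=
  qPoch q q N / (qPoch q q n * qPoch q q (N - n))

lemma qPoch_succ (q a : ℂ) (n : ℕ) : qPoch q a (n+1) = qPoch q a n * (1 - a * q ^ n) :=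
  Finset.prod_range_succ _ _

lemma qq_ne' (q : ℂ) (hfac : ∀ k : ℕ, (1 : ℂ) - q * q ^ k ≠ 0) (m : ℕ) : qPoch q q m ≠ 0 := by
  apply Finset.prod_ne_zero_iff.mpr
  intro k _
  exact hfac k

lemma qPoch_add (q a : ℂ) (p m : ℕ) :
    qPoch q a (p + m) = qPoch q a p * qPoch q (a * q ^ p) m := by
  rw [qPoch, Finset.prod_range_add]
  congr 1
  apply Finset.prod_congr rfl
  intro i _
  rw [pow_add]
  ring

-- reindex Icc to range
lemma sum_Icc_range (f : ℕ → ℂ) (j N : ℕ) (h : j ≤ N) :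
    ∑ n ∈ Icc j N, f n = ∑ m ∈ range (N - j + 1), f (j + m) := by
  apply Finset.sum_nbij' (fun n => n - j) (fun m => j + m)
  · intro n hn; simp only [mem_Icc, Finset.mem_range] at *; omega
  · intro m hm; simp only [mem_Icc, Finset.mem_range] at *; omega
  · intro n hn; simp only [mem_Icc] at hn; omega
  · intro m hm; simp only [Finset.mem_range] at hm; omega
  · intro n hn; simp only [mem_Icc] at hn
    congr 1
    omega


lemma qPoch_succ' (q a : ℂ) (n : ℕ) : qPoch q a (n+1) = (1 - a) * qPoch q (a*q) n := by
  rw [qPoch, Finset.prod_range_succ']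
  simp only [pow_zero, mul_one]
  rw [mul_comm]
  congr 1
  apply Finset.prod_congr rfl
  intro k _
  rw [pow_succ']
  ring_nf

lemma tri (m : ℕ) : (m+1) * m / 2 = m * (m-1) / 2 + m := by
  have h1 : (m+1) * m / 2 = (m+1).choose 2 := by rw [Nat.choose_two_right]; simp
  have h2 : m * (m-1) / 2 = m.choose 2 := by rw [Nat.choose_two_right]
  rw [h1, h2, Nat.choose_succ_succ, Nat.choose_one_right, Nat.add_comm]

lemma qBinom_zero (q : ℂ) (hfac : ∀ k : ℕ, (1 : ℂ) - q * q ^ k ≠ 0) (M : ℕ) : qBinom q M 0 = 1 := by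
  rw [qBinom]
  have h0 : qPoch q q 0 = 1 := by simp [qPoch]
  rw [h0, Nat.sub_zero, one_mul, div_self (qq_ne' q hfac M)]

lemma qBinom_self (q : ℂ) (hfac : ∀ k : ℕ, (1 : ℂ) - q * q ^ k ≠ 0) (M : ℕ) : qBinom q M M = 1 := by
  rw [qBinom, Nat.sub_self]
  have h0 : qPoch q q 0 = 1 := by simp [qPoch]
  rw [h0, mul_one, div_self (qq_ne' q hfac M)]

lemma qPascal (q : ℂ) (hfac : ∀ k : ℕ, (1 : ℂ) - q * q ^ k ≠ 0) (i M : ℕ) (h : i + 1 ≤ M) :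
    qBinom q (M+1) (i+1) = q^(i+1) * qBinom q M (i+1) + qBinom q M i := by
  obtain ⟨d, rfl⟩ : ∃ d, M = i + 1 + d := ⟨M - (i+1), by omega⟩
  have e1 : i + 1 + d + 1 - (i + 1) = d + 1 := by omega
  have e2 : i + 1 + d - (i + 1) = d := by omega
  have e3 : i + 1 + d - i = d + 1 := by omega
  rw [qBinom, qBinom, qBinom, e1, e2, e3]
  rw [show i + 1 + d + 1 = (i + 1 + d) + 1 from rfl, qPoch_succ q q (i+1+d)]
  rw [qPoch_succ q q d, qPoch_succ q q i]
  have n1 := qq_ne' q hfac (i+1+d)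
  have n2 := qq_ne' q hfac (i+1)
  have n3 := qq_ne' q hfac d
  have n4 := qq_ne' q hfac i
  have n5 := hfac d
  have n6 := hfac i
  field_simp
  ring

lemma Wlem (q : ℂ) (hfac : ∀ k : ℕ, (1 : ℂ) - q * q ^ k ≠ 0) (b : ℂ) :
    ∀ (M : ℕ) (a : ℂ),
    ∑ m ∈ range (M+1), qBinom q M m * ((-1)^m * q^(m*(m-1)/2) * a^m * qPoch q b m *
      ∏ k ∈ range (M-m), (1 - a*b*q^(m+k))) = qPoch q a M := by
  intro M
  induction M with
  | zero =>
      intro a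
      rw [Finset.sum_range_one]
      simp [qBinom, qPoch]
  | succ M ih =>
      intro a
      set G : ℕ → ℂ := fun m => (-1)^m * q^(m*(m-1)/2) * a^m * qPoch q b m *
        ∏ k ∈ range (M+1-m), (1 - a*b*q^(m+k)) with hG
      have key : ∀ m ∈ range (M+1),
          q^m * qBinom q M m * G m + qBinom q M m * G (m+1)
          = (1-a) * (qBinom q M m * ((-1)^m * q^(m*(m-1)/2) * (a*q)^m * qPoch q b m *
              ∏ k ∈ range (M-m), (1 - (a*q)*b*q^(m+k)))) := by
        intro m hm
        rw [Finset.mem_range] at hm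
        have hm' : m ≤ M := by omega
        have hMm : M + 1 - m = (M - m) + 1 := by omega
        have hprod : ∏ k ∈ range (M+1-m), (1 - a*b*q^(m+k))
            = (∏ k ∈ range (M-m), (1 - a*b*q^(m+1+k))) * (1 - a*b*q^m) := by
          rw [hMm, Finset.prod_range_succ']
          simp only [add_zero]
          congr 1
          apply Finset.prod_congr rfl
          intro k _
          have hk : m + (k + 1) = m + 1 + k := by omega
          rw [hk]
        have hprod2 : ∏ k ∈ range (M+1-(m+1)), (1 - a*b*q^(m+1+k))
            = ∏ k ∈ range (M-m), (1 - a*b*q^(m+1+k)) := by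
          have hk : M + 1 - (m+1) = M - m := by omega
          rw [hk]
        have hprod3 : ∀ k, (1:ℂ) - (a*q)*b*q^(m+k) = 1 - a*b*q^(m+1+k) := by
          intro k
          have : (q:ℂ)^(m+1+k) = q * q^(m+k) := by
            rw [← pow_succ']
            congr 1
            omega
          rw [this]; ring
        simp only [hG]
        rw [hprod, hprod2]
        rw [Finset.prod_congr rfl (fun k _ => hprod3 k)]
        rw [qPoch_succ q b m]
        have hexp : (m+1) * (m+1-1) / 2 = m*(m-1)/2 + m := by
          simp only [Nat.add_sub_cancel]
          exact tri m
        rw [hexp, pow_add, pow_succ, mul_pow]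
        ring
      -- now assemble
      have hsplit : ∑ m ∈ range (M+1+1), qBinom q (M+1) m * G m
          = G 0 + (∑ m ∈ range M, qBinom q (M+1) (m+1) * G (m+1)) + G (M+1) := by
        rw [Finset.sum_range_succ, Finset.sum_range_succ']
        rw [qBinom_zero q hfac, qBinom_self q hfac]
        ring
      have hS1 : ∑ m ∈ range (M+1), q^m * qBinom q M m * G m
          = (∑ m ∈ range M, q^(m+1) * qBinom q M (m+1) * G (m+1)) + G 0 := by
        rw [Finset.sum_range_succ']
        rw [qBinom_zero q hfac, pow_zero, one_mul, one_mul]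
      have hS2 : ∑ m ∈ range (M+1), qBinom q M m * G (m+1)
          = (∑ m ∈ range M, qBinom q M m * G (m+1)) + G (M+1) := by
        rw [Finset.sum_range_succ, qBinom_self q hfac, one_mul]
      have hmain : ∑ m ∈ range (M+1+1), qBinom q (M+1) m * G m
          = ∑ m ∈ range (M+1), (q^m * qBinom q M m * G m + qBinom q M m * G (m+1)) := by
        rw [Finset.sum_add_distrib, hS1, hS2, hsplit]
        have hp : ∀ m ∈ range M, qBinom q (M+1) (m+1) * G (m+1)
            = q^(m+1) * qBinom q M (m+1) * G (m+1) + qBinom q M m * G (m+1) := by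
          intro m hm
          rw [Finset.mem_range] at hm
          rw [qPascal q hfac m M (by omega)]
          ring
        rw [Finset.sum_congr rfl hp, Finset.sum_add_distrib]
        ring
      rw [hmain, Finset.sum_congr rfl key, ← Finset.mul_sum, ih (a*q), ← qPoch_succ']
lemma pow_inj (q : ℂ) (hq : ‖q‖ < 1) (hq0 : q ≠ 0) {j k : ℕ}
    (h : q ^ j = q ^ k) : j = k := by
  have h0 : (0:ℝ) < ‖q‖ := by simpa using hq0
  have habs : ‖q‖ ^ j = ‖q‖ ^ k := by
    rw [← norm_pow, ← norm_pow, h]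
  rcases lt_trichotomy j k with hlt | heq | hgt
  · exact absurd habs (ne_of_gt (pow_lt_pow_right_of_lt_one₀ h0 hq hlt))
  · exact heq
  · exact absurd habs.symm (ne_of_gt (pow_lt_pow_right_of_lt_one₀ h0 hq hgt))

lemma pf_aux (q e : ℂ) (hq : ‖q‖ < 1) (hq0 : q ≠ 0) (n : ℕ) (hn : 1 ≤ n)
    (he : ∀ k, 1 ≤ k → k ≤ n → e ≠ q ^ k) :
    (∏ k ∈ Icc 1 n, (e - q ^ k))⁻¹
      = ∑ j ∈ Icc 1 n, ((e - q ^ j)⁻¹ *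
          (∏ k ∈ (Icc 1 n).erase j, (q ^ j - q ^ k))⁻¹) := by
  have hinj : Set.InjOn (fun k : ℕ => q ^ k) (Icc 1 n : Finset ℕ) := by
    intro x _ y _ h
    exact pow_inj q hq hq0 h
  have hs : (Icc 1 n).Nonempty := ⟨1, by simp [hn]⟩
  have heval := congrArg (Polynomial.eval e) (Lagrange.sum_basis hinj hs)
  rw [Polynomial.eval_finset_sum, Polynomial.eval_one] at heval
  have hterm : ∀ j ∈ Icc 1 n, Polynomial.eval e (Lagrange.basis (Icc 1 n) (fun k => q ^ k) j)
      = (∏ k ∈ Icc 1 n, (e - q ^ k)) * ((e - q ^ j)⁻¹ *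
          (∏ k ∈ (Icc 1 n).erase j, (q ^ j - q ^ k))⁻¹) := by
    intro j hj
    rw [Lagrange.basis, Polynomial.eval_prod]
    have h1 : ∀ k ∈ (Icc 1 n).erase j, Polynomial.eval e (Lagrange.basisDivisor (q ^ j) (q ^ k))
        = (q ^ j - q ^ k)⁻¹ * (e - q ^ k) := by
      intro k _
      simp [Lagrange.basisDivisor]
    rw [Finset.prod_congr rfl h1, Finset.prod_mul_distrib, ← Finset.prod_inv_distrib]
    have h2 := Finset.prod_erase_mul (Icc 1 n) (fun k => e - q ^ k) hj
    have hej : e - q ^ j ≠ 0 := by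
      simp only [mem_Icc] at hj
      exact sub_ne_zero.mpr (he j hj.1 hj.2)
    have h3 : ∏ k ∈ (Icc 1 n).erase j, (e - q ^ k)
        = (∏ k ∈ Icc 1 n, (e - q ^ k)) * (e - q ^ j)⁻¹ := by
      field_simp
      linear_combination h2
    rw [h3]; ring
  rw [Finset.sum_congr rfl hterm, ← Finset.mul_sum] at heval
  exact inv_eq_of_mul_eq_one_right heval

lemma qPoch_Icc (q : ℂ) (m : ℕ) : qPoch q q m = ∏ k ∈ Icc 1 m, (1 - q ^ k) := by
  rw [qPoch]
  apply Finset.prod_nbij' (fun k => k + 1) (fun k => k - 1)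
  · intro k hk; simp only [Finset.mem_range, mem_Icc] at *; omega
  · intro k hk; simp only [Finset.mem_range, mem_Icc] at *; omega
  · intro k hk; simp only [Finset.mem_range, mem_Icc] at *; omega
  · intro k hk; simp only [Finset.mem_range, mem_Icc] at *; omega
  · intro k hk; rw [pow_succ']

lemma prodB (q : ℂ) (j n : ℕ) (hj : 1 ≤ j) (hjn : j ≤ n) :
    ∏ k ∈ (Icc 1 n).erase j, (q ^ j - q ^ k)
      = (-1 : ℂ) ^ (j - 1) * q ^ (j * (j - 1) / 2 + j * (n - j)) *
        qPoch q q (j - 1) * qPoch q q (n - j) := by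
  have hsplit : (Icc 1 n).erase j = Icc 1 (j-1) ∪ Icc (j+1) n := by
    ext k
    simp only [mem_erase, mem_Icc, mem_union]
    omega
  have hdisj : Disjoint (Icc 1 (j-1)) (Icc (j+1) n) := by
    rw [Finset.disjoint_left]
    intro k hk hk'
    simp only [mem_Icc] at hk hk'
    omega
  rw [hsplit, Finset.prod_union hdisj]
  have hlow : ∏ k ∈ Icc 1 (j-1), (q ^ j - q ^ k)
      = (-1 : ℂ) ^ (j - 1) * q ^ (j * (j - 1) / 2) * qPoch q q (j - 1) := by
    have h1 : ∀ k ∈ Icc 1 (j-1), q ^ j - q ^ k = (-1) * q ^ k * (1 - q ^ (j - k)) := by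
      intro k hk
      simp only [mem_Icc] at hk
      have : q ^ j = q ^ k * q ^ (j - k) := by
        rw [← pow_add]; congr 1; omega
      rw [this]; ring
    rw [Finset.prod_congr rfl h1]
    rw [Finset.prod_mul_distrib, Finset.prod_mul_distrib]
    have h2 : ∏ k ∈ Icc 1 (j-1), ((-1:ℂ)) = (-1:ℂ)^(j-1) := by
      rw [Finset.prod_const, Nat.card_Icc]
      norm_num
    have h3 : ∏ k ∈ Icc 1 (j-1), (q:ℂ) ^ k = q ^ (j * (j-1) / 2) := by
      rw [Finset.prod_pow_eq_pow_sum]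
      congr 1
      have he : range j = insert 0 (Icc 1 (j-1)) := by
        ext k; simp only [mem_Icc, Finset.mem_insert, Finset.mem_range]; omega
      have h0 : 0 ∉ Icc 1 (j-1) := by simp
      have hg : ∑ i ∈ range j, i = j * (j-1) / 2 := Finset.sum_range_id j
      rw [he, Finset.sum_insert h0, zero_add] at hg
      exact hg
    have h4 : ∏ k ∈ Icc 1 (j-1), (1 - q ^ (j - k)) = qPoch q q (j-1) := by
      rw [qPoch_Icc]
      apply Finset.prod_nbij' (fun k => j - k) (fun k => j - k)
      · intro k hk; simp only [mem_Icc] at *; omega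
      · intro k hk; simp only [mem_Icc] at *; omega
      · intro k hk; simp only [mem_Icc] at *; omega
      · intro k hk; simp only [mem_Icc] at *; omega
      · intro k hk; rfl
    rw [h2, h3, h4]
  have hhigh : ∏ k ∈ Icc (j+1) n, (q ^ j - q ^ k)
      = q ^ (j * (n - j)) * qPoch q q (n - j) := by
    have h1 : ∀ k ∈ Icc (j+1) n, q ^ j - q ^ k = q ^ j * (1 - q ^ (k - j)) := by
      intro k hk
      simp only [mem_Icc] at hk
      have : q ^ k = q ^ j * q ^ (k - j) := by
        rw [← pow_add]; congr 1; omega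
      rw [this]; ring
    rw [Finset.prod_congr rfl h1, Finset.prod_mul_distrib]
    have h2 : ∏ _k ∈ Icc (j+1) n, (q:ℂ) ^ j = q ^ (j * (n - j)) := by
      rw [Finset.prod_const, Nat.card_Icc, ← pow_mul]
      have : n + 1 - (j + 1) = n - j := by omega
      rw [this]
    have h4 : ∏ k ∈ Icc (j+1) n, (1 - q ^ (k - j)) = qPoch q q (n - j) := by
      rw [qPoch_Icc]
      apply Finset.prod_nbij' (fun k => k - j) (fun k => k + j)
      · intro k hk; simp only [mem_Icc] at *; omega
      · intro k hk; simp only [mem_Icc] at *; omega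
      · intro k hk; simp only [mem_Icc] at *; omega
      · intro k hk; simp only [mem_Icc] at *; omega
      · intro k hk; rfl
    rw [h2, h4]
  rw [hlow, hhigh]; ring

lemma hshift_ne (q a : ℂ) (N : ℕ)
    (ha' : ∀ k : ℕ, k ≤ N - 1 → 1 - a * q ^ k ≠ 0)
    (p m : ℕ) (h : p + m ≤ N) (hp : 1 ≤ p) : qPoch q (a * q ^ p) m ≠ 0 := by
  apply Finset.prod_ne_zero_iff.mpr
  intro k hk
  rw [Finset.mem_range] at hk
  have : (1:ℂ) - a * q ^ p * q ^ k = 1 - a * q ^ (p + k) := by rw [pow_add]; ring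
  rw [this]
  exact ha' (p + k) (by omega)

lemma hqa_ne (q a : ℂ) (N : ℕ)
    (ha' : ∀ k : ℕ, k ≤ N - 1 → 1 - a * q ^ k ≠ 0)
    (n : ℕ) (h : n ≤ N) : qPoch q a n ≠ 0 := by
  apply Finset.prod_ne_zero_iff.mpr
  intro k hk
  rw [Finset.mem_range] at hk
  exact ha' k (by omega)

lemma bracket (q a : ℂ) (N J M : ℕ) (hNJ : N = J + 1 + M)
    (hfac : ∀ k : ℕ, (1:ℂ) - q * q ^ k ≠ 0)
    (ha' : ∀ k : ℕ, k ≤ N - 1 → 1 - a * q ^ k ≠ 0) :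
    ∑ m ∈ range (M+1),
      -(q^(J+1) * ((-1:ℂ)^m * qBinom q N (J+1+m) * qPoch q q (J+m) * qPoch q q (J+1+m)
          * a^(J+1+m) * q^(m*(m-1)/2)
          / (qPoch q a (J+1+m) * qPoch q q (J+1) * qPoch q q m)))
    = -(q^(J+1) * (qBinom q N (J+1) *
        (qPoch q q J * qPoch q a (N-(J+1)) * a^(J+1) / qPoch q a N))) := by
  set S : ℂ := qPoch q (a * q ^ (J+1)) M with hS
  set C : ℂ := -(q^(J+1) * a^(J+1) * qPoch q q N * qPoch q q J /
      (qPoch q q (J+1) * qPoch q a (J+1) * qPoch q q M * S)) with hC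
  have hSne : S ≠ 0 := hshift_ne q a N ha' (J+1) M (by omega) (by omega)
  have haJ1 : qPoch q a (J+1) ≠ 0 := hqa_ne q a N ha' (J+1) (by omega)
  have key : ∀ m ∈ range (M+1),
      -(q^(J+1) * ((-1:ℂ)^m * qBinom q N (J+1+m) * qPoch q q (J+m) * qPoch q q (J+1+m)
          * a^(J+1+m) * q^(m*(m-1)/2)
          / (qPoch q a (J+1+m) * qPoch q q (J+1) * qPoch q q m)))
      = C * (qBinom q M m * ((-1:ℂ)^m * q^(m*(m-1)/2) * a^m * qPoch q (q*q^J) m *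
          ∏ k ∈ range (M-m), (1 - a*(q*q^J)*q^(m+k)))) := by
    intro m hm
    rw [Finset.mem_range] at hm
    have hm' : m ≤ M := by omega
    have h1 : qPoch q q (J+m) = qPoch q q J * qPoch q (q*q^J) m := qPoch_add q q J m
    have h2 : qPoch q a (J+1+m) = qPoch q a (J+1) * qPoch q (a*q^(J+1)) m :=
      qPoch_add q a (J+1) m
    have h3 : S = qPoch q (a*q^(J+1)) m * ∏ k ∈ range (M-m), (1 - a*(q*q^J)*q^(m+k)) := by
      have e1 : M = m + (M - m) := by omega
      rw [hS]
      conv_lhs => rw [e1]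
      rw [qPoch_add]
      congr 1
      apply Finset.prod_congr rfl
      intro k _
      rw [pow_add, pow_succ']
      ring
    have h4 : qBinom q N (J+1+m)
        = qPoch q q N / (qPoch q q (J+1+m) * qPoch q q (M-m)) := by
      rw [qBinom]
      congr 3
      omega
    have hRm : qPoch q (a*q^(J+1)) m ≠ 0 :=
      hshift_ne q a N ha' (J+1) m (by omega) (by omega)
    have n1 := qq_ne' q hfac (J+1+m)
    have n2 := qq_ne' q hfac (M-m)
    have n3 := qq_ne' q hfac (J+1)
    have n4 := qq_ne' q hfac m
    have n5 := qq_ne' q hfac M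
    have n6 := qq_ne' q hfac N
    rw [h4, qBinom, h1, h2, hC, h3]
    have hpow : a^(J+1+m) = a^(J+1) * a^m := by rw [pow_add]
    rw [hpow]
    have hPi : (∏ k ∈ range (M-m), (1 - a*(q*q^J)*q^(m+k))) ≠ 0 := by
      intro h0
      exact hSne (by rw [h3, h0, mul_zero])
    rw [h3] at hSne
    set B1 := qPoch q q (J+1+m) with hB1
    set B2 := qPoch q q (M-m) with hB2
    set B3 := qPoch q q (J+1) with hB3
    set B4 := qPoch q q m with hB4
    set B5 := qPoch q q M with hB5
    set A0 := qPoch q q N with hA0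
    set PJ := qPoch q q J with hPJ
    set G := qPoch q (q*q^J) m with hGd
    set R := qPoch q (a*q^(J+1)) m with hR
    set Pi := ∏ k ∈ range (M-m), (1 - a*(q*q^J)*q^(m+k)) with hPid
    set Aa := qPoch q a (J+1) with hAa
    set u := (q:ℂ)^(J+1) with hu
    set v := a^(J+1) with hv
    set w := a^m with hw
    field_simp
  rw [Finset.sum_congr rfl key, ← Finset.mul_sum, Wlem q hfac (q*q^J) M a]
  -- final algebra
  have hAN : qPoch q a N = qPoch q a (J+1) * S := by
    rw [hNJ]; exact qPoch_add q a (J+1) M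
  have hMN : N - (J+1) = M := by omega
  rw [hC, qBinom, hMN, hAN]
  have n3 := qq_ne' q hfac (J+1)
  have n5 := qq_ne' q hfac M
  have n6 := qq_ne' q hfac N
  set B3 := qPoch q q (J+1) with hB3
  set B5 := qPoch q q M with hB5
  set A0 := qPoch q q N with hA0
  set PJ := qPoch q q J with hPJ
  set Aa := qPoch q a (J+1) with hAa
  set AM := qPoch q a M with hAM
  set u := (q:ℂ)^(J+1) with hu
  set v := a^(J+1) with hv
  field_simp
lemma tri2 (x : ℕ) : 2*(x*(x+1)/2) = x*(x+1) := by
  have h := (Nat.even_mul_succ_self x).two_dvd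
  omega

lemma stepzero (q a : ℂ) (N J : ℕ)
    (hfac : ∀ k : ℕ, (1:ℂ) - q * q ^ k ≠ 0) (hq0 : q ≠ 0)
    (hJN : J + 1 ≤ N) (haJ : qPoch q a (J+1+0) ≠ 0) :
    (qBinom q N (J+1+0) * (-1:ℂ)^(J+1+0) * (qPoch q q (J+0))^2 * a^(J+1+0)
        * q^((J+1+0)*(J+2+0)/2) / qPoch q a (J+1+0))
      * ((-1:ℂ)^J * q^((J+1)*J/2 + (J+1)*0) * qPoch q q J * qPoch q q 0)⁻¹
    = -(q^(J+1) * ((-1:ℂ)^0 * qBinom q N (J+1+0) * qPoch q q (J+0) * qPoch q q (J+1+0)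
        * a^(J+1+0) * q^(0*(0-1)/2)
        / (qPoch q a (J+1+0) * qPoch q q (J+1) * qPoch q q 0))) := by
  simp only [Nat.add_zero, Nat.mul_zero, Nat.zero_mul, pow_zero, Nat.zero_div, add_zero, one_mul]
  have h0 : qPoch q q 0 = 1 := by simp [qPoch]
  have R1 : (J+1)*(J+2)/2 = (J+1)*J/2 + (J+1) := by
    have t1 := tri2 J
    have t2 := tri2 (J+1)
    have e1 : (J+1)*(J+1+1) = J*(J+1) + 2*(J+1) := by ring
    have e2 : (J+1)*J = J*(J+1) := by ring
    have e3 : (J+1)*(J+2) = (J+1)*(J+1+1) := by ring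
    omega
  have hq1 : qPoch q q (J+1) = qPoch q q J * (1 - q*q^J) := qPoch_succ q q J
  rw [h0, R1, pow_add, hq1]
  have n1 := qq_ne' q hfac J
  have n2 := hfac J
  have hs : ((-1:ℂ))^J ≠ 0 := pow_ne_zero _ (by norm_num)
  have hx : (q:ℂ)^((J+1)*J/2) ≠ 0 := pow_ne_zero _ hq0
  set P := qPoch q q J with hP
  set Aa := qPoch q a (J+1) with hAa
  set X := (q:ℂ)^((J+1)*J/2) with hX
  set u := (q:ℂ)^(J+1) with hu
  set s := ((-1:ℂ))^J with hsd
  rw [pow_succ]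
  field_simp
  ring

lemma stepterm (q a : ℂ) (N J i : ℕ)
    (hfac : ∀ k : ℕ, (1:ℂ) - q * q ^ k ≠ 0) (hq0 : q ≠ 0)
    (hn : J+2+i ≤ N) (han : qPoch q a (J+1+(i+1)) ≠ 0) :
    (qBinom q N (J+1+(i+1)) * (-1:ℂ)^(J+1+(i+1)) * (qPoch q q (J+(i+1)))^2 * a^(J+1+(i+1))
        * q^((J+1+(i+1))*(J+2+(i+1))/2) / qPoch q a (J+1+(i+1)))
      * ((-1:ℂ)^J * q^((J+1)*J/2 + (J+1)*(i+1)) * qPoch q q J * qPoch q q (i+1))⁻¹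
    = q⁻¹ * ((qBinom q N (J+2+i) * (-1:ℂ)^(J+2+i) * (qPoch q q (J+1+i))^2 * a^(J+2+i)
        * q^((J+2+i)*(J+2+i+1)/2) / qPoch q a (J+2+i))
      * ((-1:ℂ)^(J+1) * q^((J+2)*(J+1)/2 + (J+2)*i) * qPoch q q (J+1) * qPoch q q i)⁻¹)
    + -(q^(J+1) * ((-1:ℂ)^(i+1) * qBinom q N (J+1+(i+1)) * qPoch q q (J+(i+1))
        * qPoch q q (J+1+(i+1)) * a^(J+1+(i+1)) * q^((i+1)*((i+1)-1)/2)
        / (qPoch q a (J+1+(i+1)) * qPoch q q (J+1) * qPoch q q (i+1)))) := by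
  have c1 : J+1+(i+1) = J+2+i := by omega
  have c2 : J+(i+1) = J+1+i := by omega
  have c3 : J+2+(i+1) = J+2+i+1 := by omega
  have c4 : (i+1)-1 = i := by omega
  rw [c1] at han ⊢
  rw [c2, c3, c4]
  -- exponent relations
  have R1 : (J+2+i)*(J+2+i+1)/2
      = ((J+1)*J/2 + (J+1)*(i+1)) + ((J+1) + ((i+1)*i/2 + (i+1))) := by
    have t3 : 2*((J+2+i)*(J+2+i+1)/2) = (J+2+i)*(J+2+i+1) := by
      have h := (Nat.even_mul_succ_self (J+2+i)).two_dvd; omega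
    have t1 : 2*((J+1)*J/2) = (J+1)*J := by
      have h := (Nat.even_mul_succ_self J).two_dvd
      have e : J*(J+1) = (J+1)*J := by ring
      omega
    have t2 : 2*((i+1)*i/2) = (i+1)*i := by
      have h := (Nat.even_mul_succ_self i).two_dvd
      have e : i*(i+1) = (i+1)*i := by ring
      omega
    have eA : (J+2+i)*(J+2+i+1) = (J+1)*J + (i+1)*i + 2*(J*i) + 4*J + 4*i + 6 := by ring
    have eB : (J+1)*(i+1) = J*i + J + i + 1 := by ring
    omega
  have R2 : (J+2)*(J+1)/2 + (J+2)*i = ((J+1)*J/2 + (J+1)*(i+1)) + i := by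
    have t1 : 2*((J+1)*J/2) = (J+1)*J := by
      have h := (Nat.even_mul_succ_self J).two_dvd
      have e : J*(J+1) = (J+1)*J := by ring
      omega
    have t2 : 2*((J+2)*(J+1)/2) = (J+2)*(J+1) := by
      have h := (Nat.even_mul_succ_self (J+1)).two_dvd
      have e : (J+1)*(J+1+1) = (J+2)*(J+1) := by ring
      omega
    have e4 : (J+2)*(J+1) = (J+1)*J + 2*(J+1) := by ring
    have e5 : (J+1)*(i+1) = (J+1)*i + (J+1) := by ring
    have e6 : (J+2)*i = (J+1)*i + i := by ring
    omega
  rw [R1, R2]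
  -- pochhammer splits
  have hq1 : qPoch q q (J+2+i) = qPoch q q (J+1+i) * (1 - q*q^(J+1+i)) := by
    have e : J+2+i = (J+1+i)+1 := by omega
    rw [e, qPoch_succ]
  have hq2 : qPoch q q (i+1) = qPoch q q i * (1 - q*q^i) := qPoch_succ q q i
  have hq3 : qPoch q q (J+1) = qPoch q q J * (1 - q*q^J) := qPoch_succ q q J
  have hq4 : (q:ℂ)^(J+1+i) = q^J * q * q^i := by rw [pow_add, pow_succ]
  rw [hq1, hq2, hq3, hq4]
  simp only [pow_add, pow_succ, pow_zero, one_mul]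
  -- generalize atoms
  generalize hBn : qBinom q N (J+2+i) = Bn
  generalize hAn : qPoch q a (J+2+i) = An at han ⊢
  generalize hP1 : qPoch q q (J+1+i) = P1
  generalize hPJ : qPoch q q J = PJ
  generalize hPi : qPoch q q i = Pi
  generalize hx1 : (q:ℂ)^((J+1)*J/2) = x1
  generalize hx2 : (q:ℂ)^((J+1)*(i+1)) = x2
  generalize hx3 : (q:ℂ)^((i+1)*i/2) = x3
  generalize hy1 : (q:ℂ)^J = y1
  generalize hy2 : (q:ℂ)^i = y2
  generalize hs1 : ((-1:ℂ))^J = s1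
  generalize hs2 : ((-1:ℂ))^i = s2
  have n1 : PJ ≠ 0 := hPJ ▸ qq_ne' q hfac J
  have n2 : Pi ≠ 0 := hPi ▸ qq_ne' q hfac i
  have n3 : P1 ≠ 0 := hP1 ▸ qq_ne' q hfac (J+1+i)
  have f1 : (1:ℂ) - q*y1 ≠ 0 := by rw [← hy1]; exact hfac J
  have f2 : (1:ℂ) - q*y2 ≠ 0 := by rw [← hy2]; exact hfac i
  have f3 : (1:ℂ) - q*(y1*q*y2) ≠ 0 := by
    rw [← hy1, ← hy2, ← hq4]; exact hfac (J+1+i)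
  have g1 : x1 ≠ 0 := hx1 ▸ pow_ne_zero _ hq0
  have g2 : x2 ≠ 0 := hx2 ▸ pow_ne_zero _ hq0
  have g3 : x3 ≠ 0 := hx3 ▸ pow_ne_zero _ hq0
  have g4 : y1 ≠ 0 := hy1 ▸ pow_ne_zero _ hq0
  have g5 : y2 ≠ 0 := hy2 ▸ pow_ne_zero _ hq0
  have g6 : s1 ≠ 0 := hs1 ▸ pow_ne_zero _ (by norm_num)
  have g7 : s2 ≠ 0 := hs2 ▸ pow_ne_zero _ (by norm_num)
  field_simp
  have hD1 : (-(s1*x1*x2*q*y2*An*PJ*Pi) + s1*x1*x2*An*PJ*Pi) ≠ 0 := by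
    have e : (-(s1*x1*x2*q*y2*An*PJ*Pi) + s1*x1*x2*An*PJ*Pi)
        = s1*x1*x2*An*PJ*Pi*(1-q*y2) := by ring
    rw [e]
    exact mul_ne_zero (mul_ne_zero (mul_ne_zero (mul_ne_zero (mul_ne_zero
      (mul_ne_zero g6 g1) g2) han) n1) n2) f2
  have hD2 : (s1*x1*x2*y1*q^2*y2*An*PJ*Pi - s1*x1*x2*q*y2*An*PJ*Pi) ≠ 0 := by
    have e : (s1*x1*x2*y1*q^2*y2*An*PJ*Pi - s1*x1*x2*q*y2*An*PJ*Pi)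
        = -(s1*x1*x2*q*y2*An*PJ*Pi*(1-q*y1)) := by ring
    rw [e]
    exact neg_ne_zero.mpr (mul_ne_zero (mul_ne_zero (mul_ne_zero (mul_ne_zero (mul_ne_zero
      (mul_ne_zero (mul_ne_zero (mul_ne_zero g6 g1) g2) hq0) g5) han) n1) n2) f1)
  have r1 := mul_inv_cancel₀ hD1
  have r2 := mul_inv_cancel₀ hD2
  linear_combination (-(Bn*a^2*a^J*a^i*q*y2)) * mul_inv_cancel₀ f1
lemma perj (q a : ℂ) (N : ℕ)
    (hfac : ∀ k : ℕ, (1:ℂ) - q * q ^ k ≠ 0) (hq0 : q ≠ 0)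
    (ha' : ∀ k : ℕ, k ≤ N - 1 → 1 - a * q ^ k ≠ 0) :
    ∀ (t j : ℕ), 1 ≤ j → j + t = N →
    ∑ n ∈ Icc j N,
      ((qBinom q N n * (-1:ℂ)^n * (qPoch q q (n-1))^2 * a^n * q^(n*(n+1)/2) / qPoch q a n)
        * ((-1:ℂ)^(j-1) * q^(j*(j-1)/2 + j*(n-j)) * qPoch q q (j-1) * qPoch q q (n-j))⁻¹)
    = -(q^j * ∑ n ∈ Icc j N,
        qBinom q N n * (qPoch q q (n-1) * qPoch q a (N-n) * a^n / qPoch q a N)) := by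
  intro t
  induction t with
  | zero =>
      intro j hj1 hjN
      rw [Nat.add_zero] at hjN
      subst hjN
      obtain ⟨K, rfl⟩ : ∃ K, j = K + 1 := ⟨j - 1, by omega⟩
      rw [Finset.Icc_self, Finset.sum_singleton, Finset.sum_singleton]
      have e1 : K + 1 - (K+1) = 0 := by omega
      have e2 : K + 1 - 1 = K := by omega
      rw [e1, e2]
      have h0 : qPoch q q 0 = 1 := by simp [qPoch]
      have h0a : qPoch q a 0 = 1 := by simp [qPoch]
      rw [h0, h0a, qBinom_self q hfac]
      have R : (K+1)*(K+1+1)/2 = (K+1)*K/2 + (K+1) := by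
        have t1 : 2*((K+1)*K/2) = (K+1)*K := by
          have h := (Nat.even_mul_succ_self K).two_dvd
          have e : K*(K+1) = (K+1)*K := by ring
          omega
        have t2 : 2*((K+1)*(K+1+1)/2) = (K+1)*(K+1+1) := by
          have h := (Nat.even_mul_succ_self (K+1)).two_dvd
          omega
        have e : (K+1)*(K+1+1) = (K+1)*K + 2*(K+1) := by ring
        omega
      rw [R, Nat.mul_zero, Nat.add_zero]
      simp only [pow_add, pow_succ, pow_zero, one_mul]
      generalize hP : qPoch q q K = P
      generalize hAa : qPoch q a (K+1) = Aa
      generalize hX : (q:ℂ)^((K+1)*K/2) = X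
      generalize hy : (q:ℂ)^K = y
      generalize hs : ((-1:ℂ))^K = s
      have n1 : P ≠ 0 := hP ▸ qq_ne' q hfac K
      have n2 : Aa ≠ 0 := hAa ▸ hqa_ne q a (K+1) ha' (K+1) le_rfl
      have g1 : X ≠ 0 := hX ▸ pow_ne_zero _ hq0
      have g2 : y ≠ 0 := hy ▸ pow_ne_zero _ hq0
      have g3 : s ≠ 0 := hs ▸ pow_ne_zero _ (by norm_num)
      field_simp
  | succ s ih =>
      intro j hj1 hjN
      obtain ⟨J, rfl⟩ : ∃ J, j = J + 1 := ⟨j - 1, by omega⟩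
      have hJN : J + 2 + s = N := by omega
      have hj1N : J + 1 ≤ N := by omega
      -- reindex LHS to range (s+2)
      rw [sum_Icc_range _ (J+1) N hj1N]
      have hcard : N - (J+1) + 1 = s + 2 := by omega
      rw [hcard]
      -- canonicalize each term
      have hcanon : ∀ m ∈ range (s+2),
          ((qBinom q N (J+1+m) * (-1:ℂ)^(J+1+m) * (qPoch q q ((J+1+m)-1))^2 * a^(J+1+m)
              * q^((J+1+m)*((J+1+m)+1)/2) / qPoch q a (J+1+m))
            * ((-1:ℂ)^((J+1)-1) * q^((J+1)*((J+1)-1)/2 + (J+1)*((J+1+m)-(J+1)))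
                * qPoch q q ((J+1)-1) * qPoch q q ((J+1+m)-(J+1)))⁻¹)
          = ((qBinom q N (J+1+m) * (-1:ℂ)^(J+1+m) * (qPoch q q (J+m))^2 * a^(J+1+m)
              * q^((J+1+m)*(J+2+m)/2) / qPoch q a (J+1+m))
            * ((-1:ℂ)^J * q^((J+1)*J/2 + (J+1)*m) * qPoch q q J * qPoch q q m)⁻¹) := by
        intro m _
        have d1 : (J+1+m)-1 = J+m := by omega
        have d2 : (J+1+m)+1 = J+2+m := by omega
        have d3 : (J+1)-1 = J := by omega
        have d4 : (J+1+m)-(J+1) = m := by omega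
        rw [d1, d2, d3, d4]
      rw [Finset.sum_congr rfl hcanon]
      rw [Finset.sum_range_succ']
      -- termwise step
      have hterm : ∀ i ∈ range (s+1),
          ((qBinom q N (J+1+(i+1)) * (-1:ℂ)^(J+1+(i+1)) * (qPoch q q (J+(i+1)))^2 * a^(J+1+(i+1))
              * q^((J+1+(i+1))*(J+2+(i+1))/2) / qPoch q a (J+1+(i+1)))
            * ((-1:ℂ)^J * q^((J+1)*J/2 + (J+1)*(i+1)) * qPoch q q J * qPoch q q (i+1))⁻¹)
          = q⁻¹ * ((qBinom q N (J+2+i) * (-1:ℂ)^(J+2+i) * (qPoch q q (J+1+i))^2 * a^(J+2+i)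
              * q^((J+2+i)*(J+2+i+1)/2) / qPoch q a (J+2+i))
            * ((-1:ℂ)^(J+1) * q^((J+2)*(J+1)/2 + (J+2)*i) * qPoch q q (J+1) * qPoch q q i)⁻¹)
          + -(q^(J+1) * ((-1:ℂ)^(i+1) * qBinom q N (J+1+(i+1)) * qPoch q q (J+(i+1))
              * qPoch q q (J+1+(i+1)) * a^(J+1+(i+1)) * q^((i+1)*((i+1)-1)/2)
              / (qPoch q a (J+1+(i+1)) * qPoch q q (J+1) * qPoch q q (i+1)))) := by
        intro i hi
        rw [Finset.mem_range] at hi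
        exact stepterm q a N J i hfac hq0 (by omega)
          (hqa_ne q a N ha' (J+1+(i+1)) (by omega))
      rw [Finset.sum_congr rfl hterm]
      rw [Finset.sum_add_distrib, ← Finset.mul_sum]
      -- apply IH at j+1 = J+2, reindexed
      have hih := ih (J+2) (by omega) (by omega)
      rw [sum_Icc_range _ (J+2) N (by omega)] at hih
      have hcard2 : N - (J+2) + 1 = s + 1 := by omega
      rw [hcard2] at hih
      have hcanon2 : ∀ i ∈ range (s+1),
          ((qBinom q N (J+2+i) * (-1:ℂ)^(J+2+i) * (qPoch q q ((J+2+i)-1))^2 * a^(J+2+i)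
              * q^((J+2+i)*((J+2+i)+1)/2) / qPoch q a (J+2+i))
            * ((-1:ℂ)^((J+2)-1) * q^((J+2)*((J+2)-1)/2 + (J+2)*((J+2+i)-(J+2)))
                * qPoch q q ((J+2)-1) * qPoch q q ((J+2+i)-(J+2)))⁻¹)
          = ((qBinom q N (J+2+i) * (-1:ℂ)^(J+2+i) * (qPoch q q (J+1+i))^2 * a^(J+2+i)
              * q^((J+2+i)*(J+2+i+1)/2) / qPoch q a (J+2+i))
            * ((-1:ℂ)^(J+1) * q^((J+2)*(J+1)/2 + (J+2)*i) * qPoch q q (J+1) * qPoch q q i)⁻¹) := by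
        intro i _
        have d1 : (J+2+i)-1 = J+1+i := by omega
        have d3 : (J+2)-1 = J+1 := by omega
        have d4 : (J+2+i)-(J+2) = i := by omega
        rw [d1, d3, d4]
      rw [Finset.sum_congr rfl hcanon2] at hih
      rw [hih]
      -- the U-part: stepzero for the m=0 term, then bracket
      rw [stepzero q a N J hfac hq0 (by omega) (hqa_ne q a N ha' (J+1+0) (by omega))]
      have hUsum : (∑ i ∈ range (s+1),
            -(q^(J+1) * ((-1:ℂ)^(i+1) * qBinom q N (J+1+(i+1)) * qPoch q q (J+(i+1))
              * qPoch q q (J+1+(i+1)) * a^(J+1+(i+1)) * q^((i+1)*((i+1)-1)/2)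
              / (qPoch q a (J+1+(i+1)) * qPoch q q (J+1) * qPoch q q (i+1)))))
          + -(q^(J+1) * ((-1:ℂ)^0 * qBinom q N (J+1+0) * qPoch q q (J+0) * qPoch q q (J+1+0)
              * a^(J+1+0) * q^(0*(0-1)/2)
              / (qPoch q a (J+1+0) * qPoch q q (J+1) * qPoch q q 0)))
          = ∑ m ∈ range (s+2),
            -(q^(J+1) * ((-1:ℂ)^m * qBinom q N (J+1+m) * qPoch q q (J+m)
              * qPoch q q (J+1+m) * a^(J+1+m) * q^(m*(m-1)/2)
              / (qPoch q a (J+1+m) * qPoch q q (J+1) * qPoch q q m))) := by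
        exact (Finset.sum_range_succ' (fun m => -(q^(J+1) * ((-1:ℂ)^m * qBinom q N (J+1+m)
          * qPoch q q (J+m) * qPoch q q (J+1+m) * a^(J+1+m) * q^(m*(m-1)/2)
          / (qPoch q a (J+1+m) * qPoch q q (J+1) * qPoch q q m)))) (s+1)).symm
      have hbr := bracket q a N J (s+1) (by omega) hfac ha'
      -- assemble RHS
      have hins : Icc (J+1) N = insert (J+1) (Icc (J+2) N) := by
        ext k
        simp only [mem_Icc, Finset.mem_insert]
        omega
      have hnotmem : (J+1) ∉ Icc (J+2) N := by
        simp only [mem_Icc]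
        omega
      rw [hins, Finset.sum_insert hnotmem]
      rw [add_assoc, hUsum, hbr]
      have hq2 : (q:ℂ)^(J+2) = q^(J+1) * q := pow_succ q (J+1)
      have hNJ1 : N - (J+1) = s + 1 := by omega
      rw [hq2, hNJ1]
      simp only [Nat.add_sub_cancel]
      field_simp
      ring
lemma hfac_of (q : ℂ) (hq : ‖q‖ < 1) : ∀ k : ℕ, (1:ℂ) - q * q ^ k ≠ 0 := by
  intro k h
  have h1 : q ^ (k+1) = 1 := by
    have := sub_eq_zero.mp h
    rw [pow_succ']
    linear_combination -this
  have h2 : ‖q ^ (k+1)‖ < 1 := by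
    rw [norm_pow]
    exact pow_lt_one₀ (norm_nonneg q) hq (Nat.succ_ne_zero k)
  rw [h1] at h2
  simp at h2

lemma qe_prod (q e : ℂ) (he : e ≠ 0) (n : ℕ) :
    qPoch q (q/e) n * e^n = ∏ k ∈ Icc 1 n, (e - q^k) := by
  rw [qPoch, ← Finset.card_range n, ← Finset.prod_const, Finset.card_range,
    ← Finset.prod_mul_distrib]
  have h1 : ∀ k ∈ range n, (1 - q/e * q^k) * e = e - q^(k+1) := by
    intro k _
    rw [pow_succ']
    field_simp
  rw [Finset.prod_congr rfl h1]
  apply Finset.prod_nbij' (fun k => k + 1) (fun k => k - 1)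
  · intro k hk; simp only [Finset.mem_range, mem_Icc] at *; omega
  · intro k hk; simp only [Finset.mem_range, mem_Icc] at *; omega
  · intro k hk; simp only [Finset.mem_range, mem_Icc] at *; omega
  · intro k hk; simp only [Finset.mem_range, mem_Icc] at *; omega
  · intro k hk; rfl

lemma swap_sum (N : ℕ) (F : ℕ → ℕ → ℂ) :
    ∑ n ∈ Icc 1 N, ∑ j ∈ Icc 1 n, F n j = ∑ j ∈ Icc 1 N, ∑ n ∈ Icc j N, F n j := by
  have h1 : ∀ n ∈ Icc 1 N, ∑ j ∈ Icc 1 n, F n j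
      = ∑ j ∈ Icc 1 N, if j ≤ n then F n j else 0 := by
    intro n hn
    rw [mem_Icc] at hn
    rw [← Finset.sum_filter]
    congr 1
    ext j
    simp only [Finset.mem_filter, mem_Icc]
    omega
  have h2 : ∀ j ∈ Icc 1 N, ∑ n ∈ Icc 1 N, (if j ≤ n then F n j else 0)
      = ∑ n ∈ Icc j N, F n j := by
    intro j hj
    rw [mem_Icc] at hj
    rw [← Finset.sum_filter]
    congr 1
    ext n
    simp only [Finset.mem_filter, mem_Icc]
    omega
  rw [Finset.sum_congr rfl h1, Finset.sum_comm, Finset.sum_congr rfl h2]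

theorem stmt18 (N : ℕ) (hN : 1 ≤ N) (q a e : ℂ) (hq : ‖q‖ < 1)
    (ha : a ≠ 0) (he : e ≠ 0)
    (ha' : ∀ k : ℕ, k ≤ N - 1 → 1 - a * q ^ k ≠ 0)
    (he' : ∀ k : ℕ, 1 ≤ k → k ≤ N → e ≠ q ^ k) :
    (∑ n ∈ Finset.Icc 1 N,
      qBinom q N n * (-1 : ℂ) ^ n * (qPoch q q (n - 1)) ^ 2 * a ^ n *
        q ^ (n * (n + 1) / 2) /
      (qPoch q a n * qPoch q (q / e) n * e ^ n))
    = -∑ n ∈ Finset.Icc 1 N,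
        qBinom q N n * (qPoch q q (n - 1) * qPoch q a (N - n) * a ^ n / qPoch q a N) *
          ∑ k ∈ Finset.Icc 1 n, q ^ k / (e - q ^ k) := by
  by_cases hq0 : q = 0
  · subst hq0
    have h1 : ∀ n ∈ Icc 1 N,
        qBinom 0 N n * (-1 : ℂ) ^ n * (qPoch 0 0 (n - 1)) ^ 2 * a ^ n *
          (0:ℂ) ^ (n * (n + 1) / 2) /
          (qPoch 0 a n * qPoch 0 (0 / e) n * e ^ n) = 0 := by
      intro n hn
      rw [mem_Icc] at hn
      have hz : (0:ℂ) ^ (n * (n + 1) / 2) = 0 := by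
        apply zero_pow
        have h2 := (Nat.even_mul_succ_self n).two_dvd
        have h3 : 1 * 2 ≤ n * (n+1) := Nat.mul_le_mul hn.1 (by omega)
        omega
      rw [hz, mul_zero, zero_div]
    have h2 : ∀ n ∈ Icc 1 N,
        qBinom 0 N n * (qPoch 0 0 (n - 1) * qPoch 0 a (N - n) * a ^ n / qPoch 0 a N) *
          ∑ k ∈ Icc 1 n, (0:ℂ) ^ k / (e - (0:ℂ) ^ k) = 0 := by
      intro n hn
      have : ∀ k ∈ Icc 1 n, (0:ℂ) ^ k / (e - (0:ℂ) ^ k) = 0 := by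
        intro k hk
        rw [mem_Icc] at hk
        rw [zero_pow (by omega), zero_div]
      rw [Finset.sum_congr rfl this, Finset.sum_const_zero, mul_zero]
    rw [Finset.sum_congr rfl h1, Finset.sum_congr rfl h2]
    simp
  · -- main case
    have hfac := hfac_of q hq
    -- LHS transformation
    have hL : ∀ n ∈ Icc 1 N,
        qBinom q N n * (-1 : ℂ) ^ n * (qPoch q q (n - 1)) ^ 2 * a ^ n *
          q ^ (n * (n + 1) / 2) / (qPoch q a n * qPoch q (q / e) n * e ^ n)
        = ∑ j ∈ Icc 1 n,
            ((qBinom q N n * (-1:ℂ)^n * (qPoch q q (n-1))^2 * a^n * q^(n*(n+1)/2)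
              / qPoch q a n)
              * ((e - q^j)⁻¹ * (∏ k ∈ (Icc 1 n).erase j, (q ^ j - q ^ k))⁻¹)) := by
      intro n hn
      rw [mem_Icc] at hn
      rw [mul_assoc (qPoch q a n), qe_prod q e he n, ← div_div, div_eq_mul_inv _
        (∏ k ∈ Icc 1 n, (e - q^k))]
      rw [pf_aux q e hq hq0 n hn.1 (fun k hk1 hk2 => he' k hk1 (le_trans hk2 hn.2))]
      rw [Finset.mul_sum]
    rw [Finset.sum_congr rfl hL, swap_sum]
    -- RHS transformation
    have hR : ∀ n ∈ Icc 1 N,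
        qBinom q N n * (qPoch q q (n - 1) * qPoch q a (N - n) * a ^ n / qPoch q a N) *
          ∑ k ∈ Icc 1 n, q ^ k / (e - q ^ k)
        = ∑ j ∈ Icc 1 n, (qBinom q N n * (qPoch q q (n - 1) * qPoch q a (N - n) * a ^ n
            / qPoch q a N) * (q ^ j / (e - q ^ j))) := by
      intro n _
      rw [Finset.mul_sum]
    rw [Finset.sum_congr rfl hR, swap_sum]
    rw [← Finset.sum_neg_distrib]
    apply Finset.sum_congr rfl
    intro j hj
    rw [mem_Icc] at hj
    -- per-j: convert with prodB then apply perj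
    have hBc : ∀ n ∈ Icc j N,
        ((qBinom q N n * (-1:ℂ)^n * (qPoch q q (n-1))^2 * a^n * q^(n*(n+1)/2)
          / qPoch q a n)
          * ((e - q^j)⁻¹ * (∏ k ∈ (Icc 1 n).erase j, (q ^ j - q ^ k))⁻¹))
        = (e - q^j)⁻¹ * ((qBinom q N n * (-1:ℂ)^n * (qPoch q q (n-1))^2 * a^n
            * q^(n*(n+1)/2) / qPoch q a n)
          * ((-1:ℂ)^(j-1) * q^(j*(j-1)/2 + j*(n-j)) * qPoch q q (j-1) * qPoch q q (n-j))⁻¹) := by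
      intro n hn
      rw [mem_Icc] at hn
      rw [prodB q j n hj.1 hn.1]
      ring
    rw [Finset.sum_congr rfl hBc, ← Finset.mul_sum]
    rw [perj q a N hfac hq0 ha' (N - j) j hj.1 (by omega)]
    rw [← Finset.sum_mul]
    rw [div_eq_mul_inv]
    ring
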